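/- arXiv:1305.5481 — 3 statements merged into one kernel-verified Lean document; each statement's English description precedes it below -/
import Mathlib

section
/- For every natural number k with 0 ≤ k ≤ M−1, the approximate Jacobian satisfies A^k f = J^k f; that is, the powers of the Krylov-restricted operator A applied to f agree with the powers of the true operator J applied to f for all exponents strictly below the Krylov dimension M. (Paper's Lemma on the property of the Rosenbrock–Krylov approximate Jacobian, Lemma 1.) -/
theorem mul_mul_pow_smul_eq_pow_smul {G X : Type*} [Monoid G] [MulAction G X]
    {q j : G} {x : X} {k : ℕ} (h : ∀ i ≤ k, q • j ^ i • x = j ^ i • x) :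
    (q * j * q) ^ k • x = j ^ k • x := by
  induction k with
  | zero => simp
  | succ k ih =>
    calc (q * j * q) ^ (k + 1) • x = q • j • q • (q * j * q) ^ k • x := by
          simp only [pow_succ', mul_smul]
      _ = q • j • q • j ^ k • x := by rw [ih fun i hi => h i (by omega)]
      _ = q • j ^ (k + 1) • x := by rw [h k (by omega), pow_succ', mul_smul]
      _ = j ^ (k + 1) • x := h (k + 1) le_rfl

/-- Lemma 1 (Property of the Rosenbrock–Krylov approximate Jacobian):
for `0 ≤ k ≤ M - 1`, `A^k f = J^k f`, where `A = P ∘ J ∘ P` and `P` is the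
orthogonal projection onto the Krylov space `K_M(J, f)`. -/
theorem rosenbrock_krylov_approx_jacobian_pow
    {E : Type*} [NormedAddCommGroup E] [InnerProductSpace ℝ E]
    [FiniteDimensional ℝ E]
    (J : E →L[ℝ] E) (f : E) (M : ℕ) (hM : 1 ≤ M)
    (K : Submodule ℝ E)
    (hK : K = Submodule.span ℝ (Set.range fun i : Fin M => (J ^ (i : ℕ)) f))
    (P : E →L[ℝ] E)
    (hP : P = K.subtypeL.comp (K.orthogonalProjectionOnto))
    (A : E →L[ℝ] E)
    (hA : A = P.comp (J.comp P)) :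
    ∀ k : ℕ, k ≤ M - 1 → (A ^ k) f = (J ^ k) f := by
  intro k hk
  have hP_fix : ∀ i ≤ k, P ((J ^ i) f) = (J ^ i) f := fun i hi => by
    have hmem : (J ^ i) f ∈ K := hK ▸ Submodule.subset_span ⟨⟨i, by omega⟩, rfl⟩
    rw [hP]
    exact K.starProjection_eq_self_iff.2 hmem
  rw [hA]
  exact mul_mul_pow_smul_eq_pow_smul (q := P) (j := J) (x := f) hP_fix
end

section
/- For every natural number ℓ ≤ M−1 and every word w of length ℓ in the two letters A and J (i.e., every finite composition of ℓ operators, each factor being either A or J), the word applied to f equals J^ℓ f: w(f) = J^ℓ f. In particular, every linear TW-tree of order k ≤ M corresponds to the single elementary differential J^{k−1} f regardless of the coloring of its nodes. (Paper's Lemma on elementary differentials of linear trees, Lemma 2.) -/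
/-! Every letter maps `J^n f` to `J^(n+1) f` as long as `n + 1 < M`: for `J` trivially, and for
`A = P J P` because `P` fixes both `J^n f` and `J^(n+1) f`, which lie in the Krylov space. A word
of length `ℓ ≤ M - 1` only ever feeds its letters vectors `J^n f` with `n < ℓ`. -/

theorem List.ofFn_prod_apply_eq_pow_apply {R X : Type*} [Semiring R] [TopologicalSpace X]
    [AddCommMonoid X] [Module R X] (J : X →L[R] X) (x : X) {ℓ : ℕ} (w : Fin ℓ → X →L[R] X)
    (hw : ∀ i, ∀ n < ℓ, w i ((J ^ n) x) = (J ^ (n + 1)) x) :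
    (List.ofFn w).prod x = (J ^ ℓ) x := by
  induction ℓ with
  | zero => simp
  | succ ℓ ih =>
    have htail : (List.ofFn fun i : Fin ℓ => w i.succ).prod x = (J ^ ℓ) x :=
      ih _ fun i n hn => hw i.succ n (by omega)
    rw [List.ofFn_succ, List.prod_cons, mul_apply_eq_comp, htail]
    exact hw 0 ℓ ℓ.lt_succ_self

theorem pow_apply_mem_span_range_pow_apply {R X : Type*} [Semiring R] [TopologicalSpace X]
    [AddCommMonoid X] [Module R X] (J : X →L[R] X) (x : X) {M i : ℕ} (hi : i < M) :
    (J ^ i) x ∈ Submodule.span R (Set.range fun j : Fin M => (J ^ (j : ℕ)) x) :=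
  Submodule.subset_span ⟨⟨i, hi⟩, rfl⟩

theorem ContinuousLinearMap.comp_comp_apply_of_apply_eq_self {R X : Type*} [Semiring R]
    [TopologicalSpace X] [AddCommMonoid X] [Module R X] {P : X →L[R] X} (J : X →L[R] X) {x : X}
    (hx : P x = x) (hJx : P (J x) = J x) :
    P.comp (J.comp P) x = J x := by
  rw [comp_apply, comp_apply, hx, hJx]

theorem linear_tree_elementary_differential_general
    {E : Type*} [NormedAddCommGroup E] [InnerProductSpace ℝ E]
    [FiniteDimensional ℝ E]
    (J : E →L[ℝ] E) (f : E) (M : ℕ)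
    (K : Submodule ℝ E)
    (hK : K = Submodule.span ℝ (Set.range fun i : Fin M => (J ^ (i : ℕ)) f))
    (P : E →L[ℝ] E)
    (hP : P = K.subtypeL.comp K.orthogonalProjection)
    (A : E →L[ℝ] E)
    (hA : A = P.comp (J.comp P)) :
    ∀ ℓ : ℕ, ℓ ≤ M - 1 → ∀ w : Fin ℓ → (E →L[ℝ] E),
      (∀ i, w i = A ∨ w i = J) → ((List.ofFn w).prod) f = (J ^ ℓ) f := by
  intro ℓ hℓ w hw
  have hPfix : ∀ y ∈ K, P y = y := fun y hy => by
    rw [hP]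
    exact K.starProjection_eq_self_iff.2 hy
  have hmem : ∀ i < M, (J ^ i) f ∈ K := fun i hi => by
    rw [hK]
    exact pow_apply_mem_span_range_pow_apply J f hi
  refine List.ofFn_prod_apply_eq_pow_apply J f w fun i n hn => ?_
  have hJ : J ((J ^ n) f) = (J ^ (n + 1)) f := by rw [pow_succ', mul_apply_eq_comp]
  rcases hw i with hwi | hwi
  · have hJmem : J ((J ^ n) f) ∈ K := hJ ▸ hmem (n + 1) (by omega)
    rw [hwi, hA, ContinuousLinearMap.comp_comp_apply_of_apply_eq_self J
      (hPfix _ (hmem n (by omega))) (hPfix _ hJmem), hJ]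
  · rw [hwi, hJ]

/-- Lemma 2 (Elementary differentials of linear TW-trees): every word of length
`ℓ ≤ M - 1` in the two letters `A` and `J` applied to `f` equals `J^ℓ f`, where
`A = P ∘ J ∘ P` and `P` is the orthogonal projection onto the Krylov space
`K_M(J, f)`.  Hence every linear TW-tree of order `k ≤ M` corresponds to the single
elementary differential `J^{k-1} f`, regardless of the coloring of its nodes. -/
theorem linear_tree_elementary_differential
    {E : Type*} [NormedAddCommGroup E] [InnerProductSpace ℝ E]
    [FiniteDimensional ℝ E]
    (J : E →L[ℝ] E) (f : E) (M : ℕ) (hM : 1 ≤ M)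
    (K : Submodule ℝ E)
    (hK : K = Submodule.span ℝ (Set.range fun i : Fin M => (J ^ (i : ℕ)) f))
    (P : E →L[ℝ] E)
    (hP : P = K.subtypeL.comp K.orthogonalProjection)
    (A : E →L[ℝ] E)
    (hA : A = P.comp (J.comp P)) :
    ∀ ℓ : ℕ, ℓ ≤ M - 1 → ∀ w : Fin ℓ → (E →L[ℝ] E),
      (∀ i, w i = A ∨ w i = J) → ((List.ofFn w).prod) f = (J ^ ℓ) f :=
  linear_tree_elementary_differential_general J f M K hK P hP A hA
end

section
/- Conversely, suppose λ ∈ S satisfies the reduced stage equation (I − c·A) λ = h·P F + h·A u for scalars c, h ∈ ℝ and vectors F, u ∈ E. Then the vector k := λ + h·(F − P F) satisfies the full Rosenbrock stage equation (I − c·A) k = h·F + h·A u. (Paper's stage reconstruction formula (2.12): k_i = V λ_i + h(F_i − V φ_i).) -/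
/-!
Since `P` is idempotent, `A = P J P` satisfies `A P = A`, so `A` kills the correction
`h • (F - P F)`. Hence `I - c • A` acts on the correction as the identity, and adding it to `λ`
adds back exactly the part `h • (F - P F)` of `h • F` missing from the reduced right-hand side.
-/

namespace ContinuousLinearMap

theorem comp_comp_comp_self_of_isIdempotentElem {R M : Type*} [Semiring R] [AddCommMonoid M]
    [Module R M] [TopologicalSpace M] {P : M →L[R] M} (hP : IsIdempotentElem P)
    (J : M →L[R] M) : (P.comp (J.comp P)).comp P = P.comp (J.comp P) := by
  change P * J * P * P = P * J * P
  rw [mul_assoc, hP.eq]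

theorem apply_sub_apply_eq_zero_of_comp_eq {R M : Type*} [Ring R] [AddCommGroup M] [Module R M]
    [TopologicalSpace M] {A P : M →L[R] M} (hAP : A.comp P = A) (x : M) :
    A (x - P x) = 0 := by
  rw [map_sub, ← comp_apply, hAP, sub_self]

theorem id_sub_smul_apply_add_smul_sub_eq {R M : Type*} [CommRing R] [AddCommGroup M]
    [Module R M] [TopologicalSpace M] [IsTopologicalAddGroup M] [ContinuousConstSMul R M]
    {A P : M →L[R] M} (hAP : A.comp P = A) (c h : R) (F u lam : M)
    (hreduced : (ContinuousLinearMap.id R M - c • A) lam = h • P F + h • A u) :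
    (ContinuousLinearMap.id R M - c • A) (lam + h • (F - P F)) = h • F + h • A u := by
  have hker : A (h • (F - P F)) = 0 := by
    rw [map_smul, apply_sub_apply_eq_zero_of_comp_eq hAP, smul_zero]
  calc (ContinuousLinearMap.id R M - c • A) (lam + h • (F - P F))
      = (ContinuousLinearMap.id R M - c • A) lam + h • (F - P F) := by
        simp only [map_add, sub_apply, id_apply, smul_apply, hker, smul_zero, sub_zero]
    _ = h • F + h • A u := by
        rw [hreduced, smul_sub]
        abel

end ContinuousLinearMap

theorem rosenbrock_stage_reconstruction_general
    {E : Type*} [NormedAddCommGroup E] [InnerProductSpace ℝ E]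
    [FiniteDimensional ℝ E]
    (S : Submodule ℝ E) (J : E →L[ℝ] E)
    (P : E →L[ℝ] E)
    (hP : P = S.subtypeL.comp (Submodule.orthogonalProjection S))
    (A : E →L[ℝ] E)
    (hA : A = P.comp (J.comp P))
    (c h : ℝ) (F u lam : E)
    (hreduced : (ContinuousLinearMap.id ℝ E - c • A) lam = h • P F + h • A u) :
    (ContinuousLinearMap.id ℝ E - c • A) (lam + h • (F - P F)) = h • F + h • A u := by
  have hPidem : IsIdempotentElem P := hP ▸ S.isIdempotentElem_starProjection
  have hAP : A.comp P = A :=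
    hA ▸ ContinuousLinearMap.comp_comp_comp_self_of_isIdempotentElem hPidem J
  exact ContinuousLinearMap.id_sub_smul_apply_add_smul_sub_eq hAP c h F u lam hreduced

/-- Stage reconstruction formula (2.12): if `λ ∈ S` satisfies the reduced stage
equation `(I - c•A) λ = h • P F + h • A u`, then `k = λ + h • (F - P F)` satisfies
the full Rosenbrock stage equation `(I - c•A) k = h•F + h•A u`. -/
theorem rosenbrock_stage_reconstruction
    {E : Type*} [NormedAddCommGroup E] [InnerProductSpace ℝ E]
    [FiniteDimensional ℝ E]
    (S : Submodule ℝ E) (J : E →L[ℝ] E)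
    (P : E →L[ℝ] E)
    (hP : P = S.subtypeL.comp (Submodule.orthogonalProjection S))
    (A : E →L[ℝ] E)
    (hA : A = P.comp (J.comp P))
    (c h : ℝ) (F u lam : E)
    (hlam : lam ∈ S)
    (hreduced : (ContinuousLinearMap.id ℝ E - c • A) lam = h • P F + h • A u) :
    (ContinuousLinearMap.id ℝ E - c • A) (lam + h • (F - P F)) = h • F + h • A u :=
  rosenbrock_stage_reconstruction_general S J P hP A hA c h F u lam hreduced
end
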